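/- arXiv:0910.5396 — 2 statements merged into one kernel-verified Lean document; each statement's English description precedes it below -/
import Mathlib

section
/- A bipartite graph G (i.e. a graph whose vertex set admits a partition into two nonempty parts V1, V2 such that every edge joins a vertex of V1 to a vertex of V2) is isomorphic to the bipartite divisor graph B(X) for some nonempty set X of positive integers if and only if G has at least one edge and G has no isolated vertices. -/
open SimpleGraph

/-- The set of primes dividing at least one element of `X`. -/
def rho (X : Set ℕ) : Set ℕ := {p | p.Prime ∧ ∃ x ∈ X, p ∣ x}

/-- `X* = X \ {1}`. -/
def Xstar (X : Set ℕ) : Set ℕ := X \ {1}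

/-- The bipartite divisor graph `B(X)` on the disjoint union `ρ(X) ⊔ X*`:
`p ∈ ρ(X)` and `x ∈ X*` are adjacent iff `p ∣ x`. -/
def BGraph (X : Set ℕ) : SimpleGraph (↥(rho X) ⊕ ↥(Xstar X)) where
  Adj u v :=
    match u, v with
    | Sum.inl p, Sum.inr x => (p : ℕ) ∣ (x : ℕ)
    | Sum.inr x, Sum.inl p => (p : ℕ) ∣ (x : ℕ)
    | _, _ => False
  symm := ⟨by rintro (p | x) (q | y) h <;> exact h⟩
  loopless := ⟨by rintro (p | x) h <;> exact h⟩

/-- The prime vertex graph `Δ(X)` on `ρ(X)`: distinct primes `p, q` are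
adjacent iff `p*q` divides some element of `X`. -/
def DeltaGraph (X : Set ℕ) : SimpleGraph ↥(rho X) where
  Adj p q := p ≠ q ∧ ∃ x ∈ X, (p : ℕ) * (q : ℕ) ∣ x
  symm := by
    constructor
    rintro p q ⟨hne, x, hx, hdvd⟩
    exact ⟨hne.symm, x, hx, by rwa [mul_comm]⟩
  loopless := ⟨by rintro p ⟨hne, -⟩; exact hne rfl⟩

/-- The common divisor graph `Γ(X)` on `X*`: distinct `x, y` are adjacent
iff `gcd(x, y) > 1`. -/
def GammaGraph (X : Set ℕ) : SimpleGraph ↥(Xstar X) where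
  Adj x y := x ≠ y ∧ 1 < Nat.gcd (x : ℕ) (y : ℕ)
  symm := by
    constructor
    rintro x y ⟨hne, h⟩
    exact ⟨hne.symm, by rwa [Nat.gcd_comm]⟩
  loopless := ⟨by rintro x ⟨hne, -⟩; exact hne rfl⟩

/-! Number the vertices and give them distinct primes. For a bipartition `S ⊔ Sᶜ` without
isolated vertices, label `v ∈ Sᶜ` by the product of the primes of its neighbours, raised to a
power that depends on `v`. Then a vertex prime divides a label exactly when the vertices are
adjacent, so the primes of `S` are `ρ(X)` and the labels are `X* = X`, and `G ≅ B(X)`.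
Conversely `B(X)` never has an isolated vertex: a prime of `ρ(X)` divides some `x ≠ 1`, and such
an `x` has a prime factor. -/

section DivisorLabel

variable {V : Type*} [Fintype V]

noncomputable def vertexPrime (u : V) : ℕ :=
  Nat.nth Nat.Prime (Fintype.equivFin V u)

theorem vertexPrime_prime (u : V) : (vertexPrime u).Prime :=
  Nat.prime_nth_prime _

theorem vertexPrime_injective : Function.Injective (vertexPrime (V := V)) := fun _ _ h =>
  (Fintype.equivFin V).injective (Fin.ext (Nat.nth_injective Nat.infinite_setOfPred_prime h))

variable (G : SimpleGraph V) [DecidableRel G.Adj]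

noncomputable def neighborPrimeProd (v : V) : ℕ :=
  ∏ u ∈ G.neighborFinset v, vertexPrime u

/-- The exponent separates vertices with the same neighbourhood. -/
noncomputable def divisorLabel (v : V) : ℕ :=
  neighborPrimeProd G v ^ ((Fintype.equivFin V v : ℕ) + 1)

theorem prime_dvd_divisorLabel_iff {p : ℕ} (hp : p.Prime) (v : V) :
    p ∣ divisorLabel G v ↔ ∃ u, G.Adj v u ∧ vertexPrime u = p := by
  rw [divisorLabel, hp.prime.dvd_pow_iff_dvd (Nat.succ_ne_zero _), neighborPrimeProd,
    hp.prime.dvd_finsetProd_iff]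
  simp only [mem_neighborFinset, Nat.prime_dvd_prime_iff_eq hp (vertexPrime_prime _), eq_comm]

theorem vertexPrime_dvd_divisorLabel_iff (u v : V) :
    vertexPrime u ∣ divisorLabel G v ↔ G.Adj v u := by
  simp only [prime_dvd_divisorLabel_iff G (vertexPrime_prime u), vertexPrime_injective.eq_iff,
    exists_eq_right]

theorem one_lt_neighborPrimeProd {v : V} (hv : ∃ u, G.Adj v u) : 1 < neighborPrimeProd G v := by
  obtain ⟨u, hu⟩ := hv
  have hdvd : vertexPrime u ∣ neighborPrimeProd G v :=
    Finset.dvd_prod_of_mem _ ((mem_neighborFinset G v u).2 hu)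
  have hpos : 0 < neighborPrimeProd G v := Finset.prod_pos fun w _ => (vertexPrime_prime w).pos
  exact (vertexPrime_prime u).one_lt.trans_le (Nat.le_of_dvd hpos hdvd)

theorem one_lt_divisorLabel {v : V} (hv : ∃ u, G.Adj v u) : 1 < divisorLabel G v :=
  Nat.one_lt_pow (Nat.succ_ne_zero _) (one_lt_neighborPrimeProd G hv)

theorem divisorLabel_injective (hG : ∀ v, ∃ u, G.Adj v u) :
    Function.Injective (divisorLabel G) := by
  intro a b hab
  have hN : G.neighborFinset a = G.neighborFinset b := by
    ext u
    simp only [mem_neighborFinset, ← vertexPrime_dvd_divisorLabel_iff, hab]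
  have hexp := Nat.pow_right_injective (one_lt_neighborPrimeProd G (hG a))
    (by simpa only [divisorLabel, neighborPrimeProd, hN] using hab)
  exact (Fintype.equivFin V).injective (Fin.ext (Nat.succ_injective hexp))

end DivisorLabel

section Bipartite

variable {V : Type*} [Fintype V] (G : SimpleGraph V) [DecidableRel G.Adj] {S : Set V}

theorem rho_image_divisorLabel_compl (hS : ∀ u v, G.Adj u v → (u ∈ S ↔ v ∉ S))
    (hG : ∀ v, ∃ u, G.Adj v u) : rho (divisorLabel G '' Sᶜ) = vertexPrime '' S := by
  ext p
  constructor
  · rintro ⟨hp, _, ⟨v, hv, rfl⟩, hpv⟩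
    obtain ⟨u, hvu, rfl⟩ := (prime_dvd_divisorLabel_iff G hp v).1 hpv
    exact ⟨u, (hS u v hvu.symm).2 hv, rfl⟩
  · rintro ⟨u, hu, rfl⟩
    obtain ⟨v, huv⟩ := hG u
    exact ⟨vertexPrime_prime u, _, ⟨v, (hS u v huv).1 hu, rfl⟩,
      (vertexPrime_dvd_divisorLabel_iff G u v).2 huv.symm⟩

theorem xstar_image_divisorLabel (hG : ∀ v, ∃ u, G.Adj v u) (T : Set V) :
    Xstar (divisorLabel G '' T) = divisorLabel G '' T := by
  refine Set.sdiff_singleton_eq_self ?_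
  rintro ⟨v, -, hv⟩
  exact (one_lt_divisorLabel G (hG v)).ne' hv

theorem nonempty_iso_bGraph_divisorLabel [DecidablePred (· ∈ S)]
    (hS : ∀ u v, G.Adj u v → (u ∈ S ↔ v ∉ S)) (hG : ∀ v, ∃ u, G.Adj v u) :
    Nonempty (G ≃g BGraph (divisorLabel G '' Sᶜ)) := by
  let primeSide : S ≃ rho (divisorLabel G '' Sᶜ) :=
    (Equiv.Set.image _ S vertexPrime_injective).trans
      (Equiv.setCongr (rho_image_divisorLabel_compl G hS hG).symm)
  let numberSide : (Sᶜ : Set V) ≃ Xstar (divisorLabel G '' Sᶜ) :=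
    (Equiv.Set.image _ Sᶜ (divisorLabel_injective G hG)).trans
      (Equiv.setCongr (xstar_image_divisorLabel G hG Sᶜ).symm)
  refine ⟨⟨(Equiv.Set.sumCompl S).symm.trans (primeSide.sumCongr numberSide), ?_⟩⟩
  intro a b
  obtain ⟨x, rfl⟩ := (Equiv.Set.sumCompl S).surjective a
  obtain ⟨y, rfl⟩ := (Equiv.Set.sumCompl S).surjective b
  simp only [Equiv.trans_apply, Equiv.symm_apply_apply]
  rcases x with ⟨u, hu⟩ | ⟨v, hv⟩ <;> rcases y with ⟨u', hu'⟩ | ⟨v', hv'⟩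
  · exact iff_of_false not_false fun h => (hS u u' h).1 hu hu'
  · exact (vertexPrime_dvd_divisorLabel_iff G u v').trans (G.adj_comm _ _)
  · exact vertexPrime_dvd_divisorLabel_iff G u' v
  · exact iff_of_false not_false fun h => hv ((hS v v' h).2 hv')

end Bipartite

theorem exists_adj_bGraph (X : Set ℕ) (z : ↥(rho X) ⊕ ↥(Xstar X)) :
    ∃ z', (BGraph X).Adj z z' := by
  rcases z with ⟨p, hp, x, hx, hpx⟩ | ⟨x, hx, hx1⟩
  · exact ⟨Sum.inr ⟨x, hx, fun h => hp.ne_one (Nat.dvd_one.1 (h ▸ hpx))⟩, hpx⟩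
  · exact ⟨Sum.inl ⟨x.minFac, Nat.minFac_prime hx1, x, hx, x.minFac_dvd⟩, x.minFac_dvd⟩

theorem SimpleGraph.Iso.exists_adj {V W : Type*} {G : SimpleGraph V} {H : SimpleGraph W}
    (φ : G ≃g H) (hH : ∀ w, ∃ w', H.Adj w w') (v : V) : ∃ v', G.Adj v v' := by
  obtain ⟨w', hw'⟩ := hH (φ v)
  exact ⟨φ.symm w', φ.map_adj_iff.1 (by simpa using hw')⟩

theorem stmt_0_general {V : Type} [Finite V] (G : SimpleGraph V) (V1 V2 : Set V)
    (hV1 : V1.Nonempty)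
    (hdisj : Disjoint V1 V2)
    (hbip : ∀ u v, G.Adj u v → (u ∈ V1 ∧ v ∈ V2) ∨ (u ∈ V2 ∧ v ∈ V1)) :
    (∃ X : Set ℕ, X.Nonempty ∧ (∀ x ∈ X, 0 < x) ∧ Nonempty (G ≃g BGraph X)) ↔
      ((∃ u v, G.Adj u v) ∧ ∀ v : V, ∃ w, G.Adj v w) := by
  classical
  have := Fintype.ofFinite V
  constructor
  · rintro ⟨X, -, -, ⟨φ⟩⟩
    have hG := φ.exists_adj (exists_adj_bGraph X)
    obtain ⟨v, -⟩ := hV1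
    exact ⟨⟨v, hG v⟩, hG⟩
  · rintro ⟨⟨u, w, huw⟩, hG⟩
    have hS : ∀ a b, G.Adj a b → (a ∈ V1 ↔ b ∉ V1) := by
      intro a b hab
      rcases hbip a b hab with ⟨ha, hb⟩ | ⟨ha, hb⟩
      · exact iff_of_true ha (hdisj.notMem_of_mem_right hb)
      · exact iff_of_false (hdisj.notMem_of_mem_right ha) (not_not_intro hb)
    refine ⟨divisorLabel G '' V1ᶜ, ?_, ?_, nonempty_iso_bGraph_divisorLabel G hS hG⟩
    · by_cases hu : u ∈ V1
      · exact ⟨_, w, (hS u w huw).1 hu, rfl⟩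
      · exact ⟨_, u, hu, rfl⟩
    · rintro _ ⟨v, -, rfl⟩
      exact (one_lt_divisorLabel G (hG v)).pos

theorem stmt_0 {V : Type} [Finite V] (G : SimpleGraph V) (V1 V2 : Set V)
    (hV1 : V1.Nonempty) (hV2 : V2.Nonempty)
    (hdisj : Disjoint V1 V2) (hcover : V1 ∪ V2 = Set.univ)
    (hbip : ∀ u v, G.Adj u v → (u ∈ V1 ∧ v ∈ V2) ∨ (u ∈ V2 ∧ v ∈ V1)) :
    (∃ X : Set ℕ, X.Nonempty ∧ (∀ x ∈ X, 0 < x) ∧ Nonempty (G ≃g BGraph X)) ↔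
      ((∃ u v, G.Adj u v) ∧ ∀ v : V, ∃ w, G.Adj v w) :=
  stmt_0_general G V1 V2 hV1 hdisj hbip
end

section
/- Let p, q ∈ ρ(X) lie in the same connected component of B(X). Then the distance between p and q in B(X) equals twice their distance in Δ(X), i.e. d_B(p,q) = 2·d_Δ(p,q). Similarly, if x, y ∈ X* lie in the same connected component of B(X), then d_B(x,y) = 2·d_Γ(x,y). -/
open SimpleGraph

/-!
In a bipartite graph every walk between two vertices of the same side alternates between the
sides, so it is a sequence of steps of length two, each joining two vertices of that side through
a common neighbour. Hence distances within one side are exactly twice the distances in the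
half-square on that side. For `B(X)` the half-square on `ρ(X)` is `Δ(X)` (two distinct primes
both divide `x` iff their product does) and the half-square on `X*` is `Γ(X)` (two numbers share
a prime factor iff their gcd exceeds `1`).
-/

open Function Set

namespace SimpleGraph

variable {V W : Type*} (G : SimpleGraph V) (f : W → V)

def halfSquare : SimpleGraph W where
  Adj w w' := w ≠ w' ∧ ∃ c, G.Adj (f w) c ∧ G.Adj c (f w')
  symm := ⟨fun _ _ ⟨hne, c, h₁, h₂⟩ => ⟨hne.symm, c, h₂.symm, h₁.symm⟩⟩
  loopless := ⟨fun _ h => h.1 rfl⟩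

variable {G f}

@[simp]
theorem halfSquare_adj {w w' : W} :
    (G.halfSquare f).Adj w w' ↔ w ≠ w' ∧ ∃ c, G.Adj (f w) c ∧ G.Adj c (f w') :=
  Iff.rfl

theorem exists_walk_length_eq_two_mul_of_halfSquare {w w' : W} (q : (G.halfSquare f).Walk w w') :
    ∃ p : G.Walk (f w) (f w'), p.length = 2 * q.length := by
  induction q with
  | nil => exact ⟨.nil, rfl⟩
  | cons h q ih =>
    obtain ⟨-, c, h₁, h₂⟩ := halfSquare_adj.1 h
    obtain ⟨p, hp⟩ := ih
    exact ⟨.cons h₁ (.cons h₂ p), by simp only [Walk.length_cons, hp]; ring⟩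

theorem exists_halfSquare_walk_two_mul_length_le (hf : Injective f) {t : Set V}
    (hG : G.IsBipartiteWith (range f) t) {w w' : W} (p : G.Walk (f w) (f w')) :
    ∃ q : (G.halfSquare f).Walk w w', 2 * q.length ≤ p.length := by
  induction hn : p.length using Nat.strong_induction_on generalizing w p with
  | _ n ih =>
  by_cases hww' : w = w'
  · subst hww'
    exact ⟨.nil, by simp⟩
  obtain ⟨c, h₁, p₁, rfl⟩ := p.exists_eq_cons_of_ne (hf.ne hww')
  have hc : c ∈ t := hG.mem_of_mem_adj (mem_range_self w) h₁
  obtain ⟨v, h₂, p₂, rfl⟩ :=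
    p₁.exists_eq_cons_of_ne (hG.disjoint.ne_of_mem (mem_range_self w') hc).symm
  obtain ⟨w'', rfl⟩ : v ∈ range f := hG.symm.mem_of_mem_adj hc h₂
  simp only [Walk.length_cons] at hn
  obtain ⟨q, hq⟩ := ih p₂.length (by omega) p₂ rfl
  by_cases hww'' : w = w''
  · subst hww''
    exact ⟨q, by omega⟩
  · refine ⟨.cons (halfSquare_adj.2 ⟨hww'', c, h₁, h₂⟩) q, ?_⟩
    simp only [Walk.length_cons]
    omega

theorem dist_eq_two_mul_dist_halfSquare (hf : Injective f) {t : Set V}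
    (hG : G.IsBipartiteWith (range f) t) {w w' : W} (h : G.Reachable (f w) (f w')) :
    G.dist (f w) (f w') = 2 * (G.halfSquare f).dist w w' := by
  obtain ⟨p, hp⟩ := h.exists_walk_length_eq_dist
  obtain ⟨q, hq⟩ := exists_halfSquare_walk_two_mul_length_le hf hG p
  obtain ⟨q', hq'⟩ := q.reachable.exists_walk_length_eq_dist
  obtain ⟨p', hp'⟩ := exists_walk_length_eq_two_mul_of_halfSquare q'
  have := dist_le q
  have := dist_le p'
  omega

end SimpleGraph

theorem isBipartiteWith_BGraph (X : Set ℕ) :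
    (BGraph X).IsBipartiteWith (range Sum.inl) (range Sum.inr) where
  disjoint := isCompl_range_inl_range_inr.disjoint
  mem_of_adj := by rintro (p | x) (q | y) h <;> simp_all [BGraph]

theorem deltaGraph_eq_halfSquare (X : Set ℕ) : DeltaGraph X = (BGraph X).halfSquare Sum.inl := by
  ext p q
  refine and_congr_right fun hpq => ⟨?_, ?_⟩
  · rintro ⟨x, hx, hdvd⟩
    have hx1 : x ≠ 1 := by
      rintro rfl
      exact p.2.1.not_dvd_one (dvd_of_mul_right_dvd hdvd)
    exact ⟨.inr ⟨x, hx, hx1⟩, dvd_of_mul_right_dvd hdvd, dvd_of_mul_left_dvd hdvd⟩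
  · rintro ⟨(r | x), hp, hq⟩
    · exact hp.elim
    · have hcop : Nat.Coprime p q := (Nat.coprime_primes p.2.1 q.2.1).2 (Subtype.coe_ne_coe.2 hpq)
      exact ⟨x, x.2.1, hcop.mul_dvd_of_dvd_of_dvd hp hq⟩

theorem gammaGraph_eq_halfSquare (X : Set ℕ) : GammaGraph X = (BGraph X).halfSquare Sum.inr := by
  ext x y
  refine and_congr_right fun hxy => ?_
  have hgcd : Nat.gcd x y ≠ 0 := fun h =>
    hxy (Subtype.ext ((Nat.gcd_eq_zero_iff.1 h).1.trans (Nat.gcd_eq_zero_iff.1 h).2.symm))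
  have hgcd' : 1 < Nat.gcd x y ↔ ¬ Nat.Coprime x y := by
    rw [Nat.Coprime]
    omega
  rw [hgcd', Nat.Prime.not_coprime_iff_dvd]
  constructor
  · rintro ⟨p, hp, hpx, hpy⟩
    exact ⟨.inl ⟨p, hp, x, x.2.1, hpx⟩, hpx, hpy⟩
  · rintro ⟨(p | z), hx, hy⟩
    · exact ⟨p, p.2.1, hx, hy⟩
    · exact hx.elim

theorem stmt_2_general (X : Set ℕ) :
    (∀ p q : ↥(rho X), (BGraph X).Reachable (Sum.inl p) (Sum.inl q) →
      (BGraph X).dist (Sum.inl p) (Sum.inl q) = 2 * (DeltaGraph X).dist p q) ∧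
    (∀ x y : ↥(Xstar X), (BGraph X).Reachable (Sum.inr x) (Sum.inr y) →
      (BGraph X).dist (Sum.inr x) (Sum.inr y) = 2 * (GammaGraph X).dist x y) := by
  refine ⟨fun p q h => ?_, fun x y h => ?_⟩
  · rw [deltaGraph_eq_halfSquare]
    exact SimpleGraph.dist_eq_two_mul_dist_halfSquare Sum.inl_injective
      (isBipartiteWith_BGraph X) h
  · rw [gammaGraph_eq_halfSquare]
    exact SimpleGraph.dist_eq_two_mul_dist_halfSquare Sum.inr_injective
      (isBipartiteWith_BGraph X).symm h

theorem stmt_2 (X : Set ℕ) (hne : X.Nonempty) (hpos : ∀ x ∈ X, 0 < x)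
    (hX1 : X ≠ {1}) :
    (∀ p q : ↥(rho X), (BGraph X).Reachable (Sum.inl p) (Sum.inl q) →
      (BGraph X).dist (Sum.inl p) (Sum.inl q) = 2 * (DeltaGraph X).dist p q) ∧
    (∀ x y : ↥(Xstar X), (BGraph X).Reachable (Sum.inr x) (Sum.inr y) →
      (BGraph X).dist (Sum.inr x) (Sum.inr y) = 2 * (GammaGraph X).dist x y) :=
  stmt_2_general X
end
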